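/- Let n ≥ 1, let k be an integer with k ≥ (n+1)/2, and let A ∈ ℂ^{n×n}. If a + ib ∈ Λ_k(A), then (t + ax + by)^{2k−n} divides the Kippenhahn polynomial f_A(t,x,y) = det(t·I_n + x·Re A + y·Im A) in ℝ[t,x,y]. -/

import Mathlib

open Matrix

noncomputable section

/-- The Hermitian real part `(A + Aᴴ)/2` of a complex matrix. -/
def ReM {n : ℕ} (A : Matrix (Fin n) (Fin n) ℂ) : Matrix (Fin n) (Fin n) ℂ :=
  (2⁻¹ : ℂ) • (A + Aᴴ)

/-- The Hermitian imaginary part `(A - Aᴴ)/(2i)` of a complex matrix. -/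
def ImM {n : ℕ} (A : Matrix (Fin n) (Fin n) ℂ) : Matrix (Fin n) (Fin n) ℂ :=
  ((2 * Complex.I)⁻¹ : ℂ) • (A - Aᴴ)

/-- The `k`-th largest eigenvalue (for `1 ≤ k ≤ n`) of a Hermitian `n × n` matrix
(with junk value `0` for non-Hermitian input): the eigenvalues sorted in increasing
order, evaluated at index `n - k`. -/
def kthEig {n : ℕ} (M : Matrix (Fin n) (Fin n) ℂ) (k : ℕ) : ℝ :=
  if hM : M.IsHermitian then
    if h : n - k < n then (hM.eigenvalues ∘ Tuple.sort hM.eigenvalues) ⟨n - k, h⟩ else 0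
  else 0

/-- `λ_k(x,y) = λ_k(x·Re A + y·Im A)`. -/
def lamXY {n : ℕ} (A : Matrix (Fin n) (Fin n) ℂ) (k : ℕ) (x y : ℝ) : ℝ :=
  kthEig ((x : ℂ) • ReM A + (y : ℂ) • ImM A) k

/-- `λ_k(θ) = λ_k(cos θ · Re A + sin θ · Im A)`. -/
def lamTheta {n : ℕ} (A : Matrix (Fin n) (Fin n) ℂ) (k : ℕ) (θ : ℝ) : ℝ :=
  lamXY A k (Real.cos θ) (Real.sin θ)

/-- The rank-`k` numerical range, via the Li–Sze halfplane description:
`Λ_k(A) = {a + ib : a cos θ + b sin θ ≤ λ_k(θ) for all θ}`. -/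
def NumRange {n : ℕ} (A : Matrix (Fin n) (Fin n) ℂ) (k : ℕ) : Set ℂ :=
  {z : ℂ | ∀ θ : ℝ, z.re * Real.cos θ + z.im * Real.sin θ ≤ lamTheta A k θ}

/-- The matrix pencil `v₀·I + v₁·Re A + v₂·Im A`. -/
def pencil {n : ℕ} (A : Matrix (Fin n) (Fin n) ℂ) (v : Fin 3 → ℝ) :
    Matrix (Fin n) (Fin n) ℂ :=
  (v 0 : ℂ) • (1 : Matrix (Fin n) (Fin n) ℂ) + (v 1 : ℂ) • ReM A + (v 2 : ℂ) • ImM A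

/-!
For each direction `θ`, put `H θ = cos θ · Re A + sin θ · Im A` and `c θ = a cos θ + b sin θ`.
Membership of `a + ib` in `Λ_k(A)` at `θ` gives at least `k` eigenvalues of `H θ` that are `≥ c θ`,
and at `θ + π`, where `H (θ + π) = -H θ`, at least `k` that are `≤ c θ`; hence `c θ` is an
eigenvalue of `H θ` of multiplicity at least `2k - n`. Writing `(x, y) = r (cos θ, sin θ)`,
`f_A(t - ax - by, x, y) = ∏ᵢ (t + r (λᵢ(H θ) - c θ))`, so for every `(x, y)` the polynomial in `t`
is divisible by `t ^ (2k - n)`. Hence `t ^ (2k - n)` divides `f_A(t - ax - by, x, y)` in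
`ℝ[t, x, y]`, and undoing the shift gives the claim.
-/

open Finset

namespace Matrix.IsHermitian
variable {𝕜 n : Type*} [RCLike 𝕜] [Fintype n] [DecidableEq n] {M : Matrix n n 𝕜}

theorem det_smul_one_add_smul (hM : M.IsHermitian) (t u : ℝ) :
    ((t : 𝕜) • (1 : Matrix n n 𝕜) + (u : 𝕜) • M).det =
      ∏ i, ((t + u * hM.eigenvalues i : ℝ) : 𝕜) := by
  have h : (t : 𝕜) • (1 : Matrix n n 𝕜) + (u : 𝕜) • M = cfc (fun x : ℝ => t + u * x) M := by
    rw [cfc_const_add t _ M (by fun_prop) hM.isSelfAdjoint, cfc_const_mul_id u M hM.isSelfAdjoint,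
      Algebra.algebraMap_eq_smul_one, RCLike.real_smul_eq_coe_smul (K := 𝕜),
      RCLike.real_smul_eq_coe_smul (K := 𝕜)]
  rw [h, hM.cfc_eq]
  simp [IsHermitian.cfc, -Unitary.conjStarAlgAut_apply, det_map]

open Polynomial in
theorem eigenvalues_neg (hM : M.IsHermitian) :
    univ.val.map hM.neg.eigenvalues = univ.val.map (-hM.eigenvalues) := by
  have hchar : ∏ i, (X - C (hM.neg.eigenvalues i : 𝕜)) =
      ∏ i, (X - C ((-hM.eigenvalues i : ℝ) : 𝕜)) := by
    rw [← hM.neg.charpoly_eq, ← cfc_neg_id (R := ℝ) (ha := hM.isSelfAdjoint), hM.charpoly_cfc_eq]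
  have hroots := congrArg roots hchar
  simp only [roots_prod _ _ (prod_ne_zero_iff.mpr fun i _ => X_sub_C_ne_zero _),
    roots_X_sub_C, Multiset.bind_singleton] at hroots
  refine Multiset.map_injective (RCLike.ofReal_injective (K := 𝕜)) ?_
  simpa only [Multiset.map_map, Function.comp_def, Pi.neg_apply] using hroots

theorem card_neg_le_eigenvalues_neg (hM : M.IsHermitian) (c : ℝ) :
    #{i | -c ≤ hM.neg.eigenvalues i} = #{i | hM.eigenvalues i ≤ c} := by
  have := congrArg (Multiset.countP (-c ≤ ·)) hM.eigenvalues_neg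
  simpa [Multiset.countP_map, card_def, filter_val] using this

end Matrix.IsHermitian

section KthEigenvalue

variable {n : ℕ} {M : Matrix (Fin n) (Fin n) ℂ}

theorem Matrix.IsHermitian.le_card_le_eigenvalues_of_le_kthEig (hM : M.IsHermitian) {k : ℕ}
    (hkn : k ≤ n) {c : ℝ} (hc : c ≤ kthEig M k) : k ≤ #{i | c ≤ hM.eigenvalues i} := by
  rcases Nat.eq_zero_or_pos k with rfl | hk
  · exact Nat.zero_le _
  have hlt : n - k < n := by omega
  set σ := Tuple.sort hM.eigenvalues
  have hmono : Monotone (hM.eigenvalues ∘ σ) := Tuple.monotone_sort hM.eigenvalues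
  rw [kthEig, dif_pos hM, dif_pos hlt] at hc
  let top : Fin k → Fin n := fun j => σ ⟨n - k + j, by omega⟩
  have htop : Function.Injective top := fun j₁ j₂ h => by
    simpa [top, Fin.ext_iff] using σ.injective h
  calc k = #(univ.map ⟨top, htop⟩) := by simp
    _ ≤ _ := card_le_card fun i hi => by
      obtain ⟨j, -, rfl⟩ := mem_map.mp hi
      exact mem_filter.mpr ⟨mem_univ _, hc.trans (hmono (by simp [Fin.le_def]))⟩

theorem Matrix.IsHermitian.le_card_eigenvalues_eq (hM : M.IsHermitian) {k : ℕ} (hkn : k ≤ n)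
    {c : ℝ} (h₁ : c ≤ kthEig M k) (h₂ : -c ≤ kthEig (-M) k) :
    2 * k - n ≤ #{i | hM.eigenvalues i = c} := by
  have hge := hM.le_card_le_eigenvalues_of_le_kthEig hkn h₁
  have hle := hM.card_neg_le_eigenvalues_neg c ▸ hM.neg.le_card_le_eigenvalues_of_le_kthEig hkn h₂
  set S₁ : Finset (Fin n) := {i | c ≤ hM.eigenvalues i}
  set S₂ : Finset (Fin n) := {i | hM.eigenvalues i ≤ c}
  have hS : S₁ ∩ S₂ = ({i | hM.eigenvalues i = c} : Finset (Fin n)) := by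
    ext i; simp [S₁, S₂, le_antisymm_iff, and_comm]
  have hunion := card_le_univ (S₁ ∪ S₂)
  have hincl := card_union_add_card_inter S₁ S₂
  rw [hS] at hincl
  rw [Fintype.card_fin] at hunion
  omega

end KthEigenvalue

theorem Polynomial.X_pow_dvd_prod_X_add_C {R ι : Type*} [CommSemiring R] [Fintype ι]
    [DecidableEq R] (f : ι → R) {m : ℕ} (hm : m ≤ #{i | f i = 0}) :
    Polynomial.X ^ m ∣ ∏ i, (Polynomial.X + Polynomial.C (f i)) := by
  rw [← prod_filter_mul_prod_filter_not univ (fun i => f i = 0)]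
  refine Dvd.dvd.mul_right ((pow_dvd_pow _ hm).trans ?_) _
  rw [← prod_const]
  exact (prod_congr rfl fun i hi => by simp [(mem_filter.mp hi).2]).dvd

theorem exists_eq_polar (w : Fin 2 → ℝ) : ∃ r θ : ℝ, w = ![r * Real.cos θ, r * Real.sin θ] := by
  refine ⟨‖(⟨w 0, w 1⟩ : ℂ)‖, Complex.arg ⟨w 0, w 1⟩, ?_⟩
  ext i
  fin_cases i <;> simp [Complex.norm_mul_cos_arg, Complex.norm_mul_sin_arg]

namespace MvPolynomial

theorem X_zero_pow_dvd_of_forall_X_pow_dvd_map_eval {R : Type*} [CommRing R] [IsDomain R]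
    [Infinite R] {d m : ℕ} {p : MvPolynomial (Fin (d + 1)) R}
    (h : ∀ w : Fin d → R, Polynomial.X ^ m ∣ (finSuccEquiv R d p).map (eval w)) :
    X 0 ^ m ∣ p := by
  have hcoeff : ∀ j < m, (finSuccEquiv R d p).coeff j = 0 := fun j hj =>
    funext fun w => by
      rw [map_zero, ← Polynomial.coeff_map]
      exact Polynomial.X_pow_dvd_iff.mp (h w) j hj
  obtain ⟨q, hq⟩ := Polynomial.X_pow_dvd_iff.mpr hcoeff
  refine ⟨(finSuccEquiv R d).symm q, (finSuccEquiv R d).injective ?_⟩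
  rw [hq, map_mul, map_pow, finSuccEquiv_X_zero, AlgEquiv.apply_symm_apply]

end MvPolynomial

section NumericalRange

variable {n : ℕ} (A : Matrix (Fin n) (Fin n) ℂ)

theorem isHermitian_ReM : (ReM A).IsHermitian := by
  simp [ReM, IsHermitian, add_comm]

theorem isHermitian_ImM : (ImM A).IsHermitian := by
  have : star ((2 * Complex.I)⁻¹ : ℂ) = -(2 * Complex.I)⁻¹ := by simp
  rw [ImM, IsHermitian, conjTranspose_smul, conjTranspose_sub, conjTranspose_conjTranspose, this,
    neg_smul, ← smul_neg, neg_sub]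

/-- `Re (e^{-iθ} A) = cos θ · Re A + sin θ · Im A`. -/
def reRot (θ : ℝ) : Matrix (Fin n) (Fin n) ℂ :=
  (Real.cos θ : ℂ) • ReM A + (Real.sin θ : ℂ) • ImM A

theorem isHermitian_reRot (θ : ℝ) : (reRot A θ).IsHermitian :=
  ((isHermitian_ReM A).smul (Complex.conj_ofReal _)).add
    ((isHermitian_ImM A).smul (Complex.conj_ofReal _))

theorem reRot_add_pi (θ : ℝ) : reRot A (θ + Real.pi) = -reRot A θ := by
  simp only [reRot, Real.cos_add_pi, Real.sin_add_pi, Complex.ofReal_neg, neg_smul, neg_add]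

theorem pencil_polar (s r θ : ℝ) :
    pencil A ![s, r * Real.cos θ, r * Real.sin θ] = (s : ℂ) • 1 + (r : ℂ) • reRot A θ := by
  simp only [pencil, reRot]
  push_cast
  module

theorem le_card_eigenvalues_reRot_eq {k : ℕ} (hkn : k ≤ n) {a b : ℝ}
    (hab : (a + b * Complex.I) ∈ NumRange A k) (θ : ℝ) :
    2 * k - n ≤ #{i | (isHermitian_reRot A θ).eigenvalues i = a * Real.cos θ + b * Real.sin θ} := by
  have hθ (φ : ℝ) : a * Real.cos φ + b * Real.sin φ ≤ kthEig (reRot A φ) k := by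
    simpa [NumRange, lamTheta, lamXY, reRot] using hab φ
  refine (isHermitian_reRot A θ).le_card_eigenvalues_eq hkn (hθ θ) ?_
  have hθπ := hθ (θ + Real.pi)
  rw [reRot_add_pi, Real.cos_add_pi, Real.sin_add_pi] at hθπ
  linarith

end NumericalRange

namespace MvPolynomial

def shiftX0 (a b : ℝ) : MvPolynomial (Fin 3) ℝ →ₐ[ℝ] MvPolynomial (Fin 3) ℝ :=
  bind₁ ![X 0 + C a * X 1 + C b * X 2, X 1, X 2]

theorem eval_shiftX0_cons (a b t x y : ℝ) (p : MvPolynomial (Fin 3) ℝ) :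
    eval (Fin.cons t ![x, y]) (shiftX0 a b p) = eval ![t + a * x + b * y, x, y] p := by
  rw [shiftX0, eval, eval₂Hom_bind₁]
  congr 2
  funext i
  fin_cases i <;> simp

@[simp]
theorem shiftX0_X_zero (a b : ℝ) : shiftX0 a b (X 0) = X 0 + C a * X 1 + C b * X 2 := by
  simp [shiftX0]

theorem shiftX0_shiftX0_neg (a b : ℝ) (p : MvPolynomial (Fin 3) ℝ) :
    shiftX0 a b (shiftX0 (-a) (-b) p) = p := by
  rw [← AlgHom.comp_apply, ← AlgHom.id_apply (R := ℝ) p]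
  congr 1
  refine algHom_ext fun i => ?_
  fin_cases i
  · simp [shiftX0]
    ring
  all_goals simp [shiftX0]

theorem dvd_of_X_zero_pow_dvd_shiftX0 {a b : ℝ} {m : ℕ} {p : MvPolynomial (Fin 3) ℝ}
    (h : X 0 ^ m ∣ shiftX0 (-a) (-b) p) : (X 0 + C a * X 1 + C b * X 2) ^ m ∣ p := by
  have := map_dvd (shiftX0 a b) h
  rwa [shiftX0_shiftX0_neg, map_pow, shiftX0_X_zero] at this

end MvPolynomial

open MvPolynomial in
theorem map_eval_finSuccEquiv_shiftX0_eq_prod {n : ℕ} (A : Matrix (Fin n) (Fin n) ℂ)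
    {fA : MvPolynomial (Fin 3) ℝ} (hfA : ∀ v : Fin 3 → ℝ, ((eval v fA : ℝ) : ℂ) = (pencil A v).det)
    (a b r θ : ℝ) :
    (finSuccEquiv ℝ 2 (shiftX0 (-a) (-b) fA)).map (eval ![r * Real.cos θ, r * Real.sin θ]) =
      ∏ i, (Polynomial.X + Polynomial.C
        (r * ((isHermitian_reRot A θ).eigenvalues i - (a * Real.cos θ + b * Real.sin θ)))) := by
  refine Polynomial.funext fun t => Complex.ofReal_injective ?_
  rw [← eval_eq_eval_mv_eval', eval_shiftX0_cons, hfA, pencil_polar, Polynomial.eval_prod,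
    Complex.ofReal_prod]
  refine ((isHermitian_reRot A θ).det_smul_one_add_smul
    (t + -a * (r * Real.cos θ) + -b * (r * Real.sin θ)) r).trans
    (prod_congr rfl fun i _ => ?_)
  rw [RCLike.ofReal_eq_complex_ofReal, Complex.ofReal_inj]
  simp only [Polynomial.eval_add, Polynomial.eval_X, Polynomial.eval_C]
  ring

open MvPolynomial in
theorem stmt17_general {n k : ℕ} (hkn : k ≤ n)
    (A : Matrix (Fin n) (Fin n) ℂ)
    (fA : MvPolynomial (Fin 3) ℝ)
    (hfA : ∀ v : Fin 3 → ℝ, ((eval v fA : ℝ) : ℂ) = (pencil A v).det)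
    (a b : ℝ) (hab : (a + b * Complex.I) ∈ NumRange A k) :
    (X 0 + C a * X 1 + C b * X 2 : MvPolynomial (Fin 3) ℝ) ^ (2 * k - n) ∣ fA := by
  refine dvd_of_X_zero_pow_dvd_shiftX0 (X_zero_pow_dvd_of_forall_X_pow_dvd_map_eval fun w => ?_)
  obtain ⟨r, θ, rfl⟩ := exists_eq_polar w
  rw [map_eval_finSuccEquiv_shiftX0_eq_prod A hfA]
  refine Polynomial.X_pow_dvd_prod_X_add_C _
    ((le_card_eigenvalues_reRot_eq A hkn hab θ).trans (card_le_card fun i => ?_))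
  simp_all

open MvPolynomial in
/-- For `k ≥ (n+1)/2`, if `a + ib ∈ Λ_k(A)` then
`(t + ax + by)^{2k−n}` divides the Kippenhahn polynomial `f_A`. -/
theorem stmt17 {n k : ℕ} (hn : 1 ≤ n) (hk : (n + 1 : ℝ) / 2 ≤ (k : ℝ)) (hkn : k ≤ n)
    (A : Matrix (Fin n) (Fin n) ℂ)
    (fA : MvPolynomial (Fin 3) ℝ)
    (hfA : ∀ v : Fin 3 → ℝ, ((eval v fA : ℝ) : ℂ) = (pencil A v).det)
    (a b : ℝ) (hab : (a + b * Complex.I) ∈ NumRange A k) :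
    (X 0 + C a * X 1 + C b * X 2 : MvPolynomial (Fin 3) ℝ) ^ (2 * k - n) ∣ fA :=
  stmt17_general hkn A fA hfA a b hab

end
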